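/- arXiv:1412.0393 — 5 statements merged into one kernel-verified Lean document; each statement's English description precedes it below -/
import Mathlib

section
/- Let T : ℂ^{n×L} → ℂ^{n×L} be the Sylvester operator T(F) = AF + FD̃ for a fixed D̃ ∈ ℂ^{L×L}, with powers defined by T⁰F = F and Tⁱ F = T(T^{i-1}F). Then the block Krylov subspace generated by T and F equals the block Krylov subspace generated by A and F: 𝕂_j(T, F) = 𝕂_j(A, F), where 𝕂_j is the span of the columns of F, T F (resp. A F), ..., T^{j-1}F (resp. A^{j-1}F). -/
open Matrix Finset

namespace SylvKrylov

variable {n L : ℕ} (A : Matrix (Fin n) (Fin n) ℂ) (Dt : Matrix (Fin L) (Fin L) ℂ)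

noncomputable def la : Module.End ℂ (Matrix (Fin n) (Fin L) ℂ) where
  toFun G := A * G
  map_add' G H := Matrix.mul_add _ _ _
  map_smul' c G := by simp [Matrix.mul_smul]

noncomputable def rb : Module.End ℂ (Matrix (Fin n) (Fin L) ℂ) where
  toFun G := G * Dt
  map_add' G H := Matrix.add_mul _ _ _
  map_smul' c G := by simp [Matrix.smul_mul]

lemma comm : Commute (la A (L := L)) (rb Dt (n := n)) := by
  apply LinearMap.ext
  intro G
  simp [la, rb, Module.End.mul_apply, Matrix.mul_assoc]

lemma la_pow (k : ℕ) (F : Matrix (Fin n) (Fin L) ℂ) : ((la A) ^ k) F = A ^ k * F := by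
  induction k with
  | zero => simp
  | succ k ih =>
    rw [pow_succ', Module.End.mul_apply, ih]
    show A * (A ^ k * F) = A ^ (k + 1) * F
    rw [pow_succ' A, Matrix.mul_assoc]

lemma rb_pow (k : ℕ) (F : Matrix (Fin n) (Fin L) ℂ) : ((rb Dt) ^ k) F = F * Dt ^ k := by
  induction k with
  | zero => simp
  | succ k ih =>
    rw [pow_succ', Module.End.mul_apply, ih]
    show (F * Dt ^ k) * Dt = F * Dt ^ (k + 1)
    rw [pow_succ Dt, Matrix.mul_assoc]

lemma neg_rb_pow (k : ℕ) (F : Matrix (Fin n) (Fin L) ℂ) :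
    ((-(rb Dt)) ^ k) F = ((-1 : ℂ) ^ k) • (F * Dt ^ k) := by
  induction k with
  | zero => simp
  | succ k ih =>
    rw [pow_succ', Module.End.mul_apply, ih, _root_.map_smul, LinearMap.neg_apply]
    show ((-1:ℂ)^k) • -((F * Dt ^ k) * Dt) = _
    rw [pow_succ (-1:ℂ), pow_succ Dt, ← Matrix.mul_assoc, mul_neg_one, neg_smul, smul_neg]

lemma iter_eq (i : ℕ) (F : Matrix (Fin n) (Fin L) ℂ) :
    (fun G => A * G + G * Dt)^[i] F = ((la A (L := L) + rb Dt (n := n)) ^ i) F := by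
  induction i with
  | zero => simp
  | succ i ih =>
    rw [Function.iterate_succ_apply', ih, pow_succ', Module.End.mul_apply]
    simp [la, rb]

lemma comm_pow (m k : ℕ) (G : Matrix (Fin n) (Fin L) ℂ) :
    ((la A (L := L) + rb Dt (n := n)) ^ m) (G * Dt ^ k)
      = (((la A (L := L) + rb Dt (n := n)) ^ m) G) * Dt ^ k := by
  have h : Commute ((la A (L := L) + rb Dt (n := n)) ^ m) ((rb Dt (n := n)) ^ k) :=
    ((comm A Dt).add_left (Commute.refl _)).pow_pow m k
  have h2 := congrArg (fun f : Module.End ℂ (Matrix (Fin n) (Fin L) ℂ) => f G) h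
  simpa [Module.End.mul_apply, rb_pow] using h2

lemma T_expand (i : ℕ) (F : Matrix (Fin n) (Fin L) ℂ) :
    (fun G => A * G + G * Dt)^[i] F
      = ∑ m ∈ range (i + 1), (i.choose m : ℂ) • (A ^ m * F * Dt ^ (i - m)) := by
  rw [iter_eq, Commute.add_pow (comm A Dt)]
  simp only [LinearMap.sum_apply, Module.End.mul_apply, Module.End.natCast_apply]
  refine Finset.sum_congr rfl fun m _ => ?_
  rw [Nat.cast_smul_eq_nsmul ℂ]
  simp [rb_pow, la_pow, Matrix.smul_mul, Matrix.mul_smul, Matrix.mul_assoc]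

lemma A_expand (i : ℕ) (F : Matrix (Fin n) (Fin L) ℂ) :
    A ^ i * F
      = ∑ m ∈ range (i + 1), ((i.choose m : ℂ) * (-1) ^ (i - m)) •
          (((fun G => A * G + G * Dt)^[m] F) * Dt ^ (i - m)) := by
  have hc : Commute (la A (L := L) + rb Dt (n := n)) (-(rb Dt (n := n))) :=
    (((comm A Dt).add_left (Commute.refl _))).neg_right
  rw [← la_pow A i F,
    show (la A (L := L)) = (la A + rb Dt) + (-(rb Dt)) from (add_neg_cancel_right _ _).symm,
    Commute.add_pow hc]
  simp only [LinearMap.sum_apply, Module.End.mul_apply, Module.End.natCast_apply]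
  refine Finset.sum_congr rfl fun m _ => ?_
  rw [show ((i.choose m) • F : Matrix (Fin n) (Fin L) ℂ) = ((i.choose m : ℂ) • F) from
      (Nat.cast_smul_eq_nsmul ℂ _ _).symm,
    _root_.map_smul, neg_rb_pow, _root_.map_smul, _root_.map_smul, comm_pow, ← iter_eq,
    smul_smul]

end SylvKrylov

open SylvKrylov in
/-- The block Krylov subspace generated by the Sylvester operator `T : F ↦ A F + F D̃`
equals the block Krylov subspace generated by `A`: `𝕂_j(T, F) = 𝕂_j(A, F)`. -/
theorem sylvester_block_krylov_invariance (n L j : ℕ) (A : Matrix (Fin n) (Fin n) ℂ)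
    (Dt : Matrix (Fin L) (Fin L) ℂ) (F : Matrix (Fin n) (Fin L) ℂ) :
    Submodule.span ℂ
      {v : Fin n → ℂ | ∃ i, i < j ∧ ∃ c : Fin L,
        v = fun r => ((fun G => A * G + G * Dt)^[i] F) r c} =
    Submodule.span ℂ
      {v : Fin n → ℂ | ∃ i, i < j ∧ ∃ c : Fin L, v = fun r => ((A ^ i) * F) r c} := by
  apply le_antisymm <;> rw [Submodule.span_le] <;> rintro v ⟨i, hi, c, rfl⟩
  · have hv : (fun r => ((fun G => A * G + G * Dt)^[i] F) r c)
        = ∑ m ∈ Finset.range (i + 1), ∑ c' : Fin L,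
            ((i.choose m : ℂ) * (Dt ^ (i - m)) c' c) •
              (fun r => (A ^ m * F) r c') := by
      funext r
      rw [T_expand]
      simp [Finset.sum_apply, Matrix.sum_apply, Matrix.mul_apply, Finset.mul_sum,
        Finset.sum_mul, mul_assoc, mul_comm, mul_left_comm]
    rw [hv]
    refine Submodule.sum_mem _ fun m hm => Submodule.sum_mem _ fun c' _ => ?_
    refine Submodule.smul_mem _ _ (Submodule.subset_span ?_)
    exact ⟨m, lt_of_le_of_lt (Nat.lt_succ_iff.mp (Finset.mem_range.mp hm)) hi, c', rfl⟩
  · have hv : (fun r => (A ^ i * F) r c)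
        = ∑ m ∈ Finset.range (i + 1), ∑ c' : Fin L,
            ((i.choose m : ℂ) * (-1) ^ (i - m) * (Dt ^ (i - m)) c' c) •
              (fun r => ((fun G => A * G + G * Dt)^[m] F) r c') := by
      funext r
      rw [A_expand A Dt i F]
      simp [Finset.sum_apply, Matrix.sum_apply, Matrix.mul_apply, Finset.mul_sum,
        Finset.sum_mul, mul_assoc, mul_comm, mul_left_comm]
    rw [hv]
    refine Submodule.sum_mem _ fun m hm => Submodule.sum_mem _ fun c' _ => ?_
    refine Submodule.smul_mem _ _ (Submodule.subset_span ?_)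
    exact ⟨m, lt_of_le_of_lt (Nat.lt_succ_iff.mp (Finset.mem_range.mp hm)) hi, c', rfl⟩
end

section
/- Let P be the orthogonal projector onto C ⊆ ℂⁿ and T(F) = AF + FD̃. If V ∈ ℂ^{n×L} has all columns orthogonal to C, then the block Krylov subspaces satisfy 𝕂_j((I−P)∘T, V) = 𝕂_j((I−P)A, V). -/
open Matrix

private lemma myColMulVec {n L : ℕ} (M : Matrix (Fin n) (Fin n) ℂ)
    (F : Matrix (Fin n) (Fin L) ℂ) (c : Fin L) :
    (fun r => (M * F) r c) = M.mulVec (fun r => F r c) := by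
  funext r; simp [Matrix.mul_apply, Matrix.mulVec, dotProduct]

private lemma myColAddRight {n L : ℕ} (M : Matrix (Fin n) (Fin n) ℂ)
    (F G : Matrix (Fin n) (Fin L) ℂ) (Dt : Matrix (Fin L) (Fin L) ℂ) (c : Fin L) :
    (fun r => (M * F + G * Dt) r c)
      = M.mulVec (fun r => F r c) + ∑ d, Dt d c • (fun r => G r d) := by
  funext r
  simp [Matrix.add_apply, Matrix.mul_apply, Matrix.mulVec, dotProduct,
    Finset.sum_apply, mul_comm]

private lemma myColSubRight {n L : ℕ} (F G : Matrix (Fin n) (Fin L) ℂ)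
    (Dt : Matrix (Fin L) (Fin L) ℂ) (c : Fin L) :
    (fun r => (F - G * Dt) r c)
      = (fun r => F r c) - ∑ d, Dt d c • (fun r => G r d) := by
  funext r
  simp [Matrix.sub_apply, Matrix.mul_apply, Finset.sum_apply, mul_comm]

private lemma aux_krylov {n L : ℕ} (j : ℕ) (Q A : Matrix (Fin n) (Fin n) ℂ)
    (Dt : Matrix (Fin L) (Fin L) ℂ) (V : Matrix (Fin n) (Fin L) ℂ)
    (hQQ : Q * Q = Q) (hQV : Q * V = V) :
    Submodule.span ℂ
      {v : Fin n → ℂ | ∃ i, i < j ∧ ∃ c : Fin L,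
        v = fun r => ((fun F => Q * (A * F + F * Dt))^[i] V) r c} =
    Submodule.span ℂ
      {v : Fin n → ℂ | ∃ i, i < j ∧ ∃ c : Fin L,
        v = fun r => (((Q * A) ^ i) * V) r c} := by
  set S : Matrix (Fin n) (Fin L) ℂ → Matrix (Fin n) (Fin L) ℂ :=
    fun F => Q * (A * F + F * Dt) with hSdef
  set M : Matrix (Fin n) (Fin n) ℂ := Q * A with hMdef
  -- Q fixes iterates of S applied to V
  have hQS : ∀ k, Q * (S^[k] V) = S^[k] V := by
    intro k
    induction k with
    | zero => simpa using hQV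
    | succ k ih =>
      rw [Function.iterate_succ_apply']
      show Q * (Q * (A * S^[k] V + S^[k] V * Dt)) = Q * (A * S^[k] V + S^[k] V * Dt)
      rw [← Matrix.mul_assoc, hQQ]
  -- key recursion
  have hSstep : ∀ k, S^[k+1] V = M * (S^[k] V) + (S^[k] V) * Dt := by
    intro k
    rw [Function.iterate_succ_apply']
    show Q * (A * S^[k] V + S^[k] V * Dt) = M * (S^[k] V) + (S^[k] V) * Dt
    rw [Matrix.mul_add, ← Matrix.mul_assoc, ← Matrix.mul_assoc, hQS k, hMdef]
  -- Krylov submodules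
  set K : ℕ → Submodule ℂ (Fin n → ℂ) := fun i =>
    Submodule.span ℂ {v : Fin n → ℂ | ∃ k, k ≤ i ∧ ∃ c : Fin L,
      v = fun r => ((M ^ k) * V) r c} with hKdef
  set K' : ℕ → Submodule ℂ (Fin n → ℂ) := fun i =>
    Submodule.span ℂ {v : Fin n → ℂ | ∃ k, k ≤ i ∧ ∃ c : Fin L,
      v = fun r => (S^[k] V) r c} with hK'def
  have Kmono : ∀ {i i'}, i ≤ i' → K i ≤ K i' := by
    intro i i' h
    apply Submodule.span_mono
    rintro x ⟨k, hk, c, rfl⟩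
    exact ⟨k, le_trans hk h, c, rfl⟩
  have K'mono : ∀ {i i'}, i ≤ i' → K' i ≤ K' i' := by
    intro i i' h
    apply Submodule.span_mono
    rintro x ⟨k, hk, c, rfl⟩
    exact ⟨k, le_trans hk h, c, rfl⟩
  -- M maps K i into K (i+1)
  have hmap : ∀ i (v : Fin n → ℂ), v ∈ K i → M.mulVec v ∈ K (i+1) := by
    intro i v hv
    induction hv using Submodule.span_induction with
    | mem x hx =>
      obtain ⟨k, hk, c, rfl⟩ := hx
      rw [← myColMulVec]
      apply Submodule.subset_span
      refine ⟨k + 1, by omega, c, ?_⟩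
      rw [← Matrix.mul_assoc, ← pow_succ']
    | zero => simpa using (Submodule.zero_mem _)
    | add x y _ _ hx hy => rw [Matrix.mulVec_add]; exact add_mem hx hy
    | smul a x _ hx => rw [Matrix.mulVec_smul]; exact Submodule.smul_mem _ _ hx
  -- M maps K' i into K' (i+1)
  have hmap' : ∀ i (v : Fin n → ℂ), v ∈ K' i → M.mulVec v ∈ K' (i+1) := by
    intro i v hv
    induction hv using Submodule.span_induction with
    | mem x hx =>
      obtain ⟨k, hk, c, rfl⟩ := hx
      rw [← myColMulVec]
      have hM : M * (S^[k] V) = S^[k+1] V - (S^[k] V) * Dt := by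
        rw [hSstep k, add_sub_cancel_right]
      rw [hM, myColSubRight]
      refine sub_mem ?_ (Submodule.sum_mem _ fun d _ => Submodule.smul_mem _ _ ?_)
      · exact Submodule.subset_span ⟨k + 1, by omega, c, rfl⟩
      · exact Submodule.subset_span ⟨k, by omega, d, rfl⟩
    | zero => simpa using (Submodule.zero_mem _)
    | add x y _ _ hx hy => rw [Matrix.mulVec_add]; exact add_mem hx hy
    | smul a x _ hx => rw [Matrix.mulVec_smul]; exact Submodule.smul_mem _ _ hx
  -- columns of S^[i] V lie in K i
  have claim1 : ∀ i (c : Fin L), (fun r => (S^[i] V) r c) ∈ K i := by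
    intro i
    induction i with
    | zero =>
      intro c
      exact Submodule.subset_span ⟨0, le_refl 0, c, by simp⟩
    | succ i ih =>
      intro c
      rw [hSstep i, myColAddRight]
      refine add_mem (hmap i _ (ih c)) (Kmono (Nat.le_succ i) ?_)
      exact Submodule.sum_mem _ fun d _ => Submodule.smul_mem _ _ (ih d)
  -- columns of M^i V lie in K' i
  have claim2 : ∀ i (c : Fin L), (fun r => ((M ^ i) * V) r c) ∈ K' i := by
    intro i
    induction i with
    | zero =>
      intro c
      exact Submodule.subset_span ⟨0, le_refl 0, c, by simp⟩
    | succ i ih =>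
      intro c
      have h : (M ^ (i+1)) * V = M * ((M ^ i) * V) := by
        rw [← Matrix.mul_assoc, ← pow_succ']
      rw [h, myColMulVec]
      exact hmap' i _ (ih c)
  -- conclude
  apply le_antisymm
  · rw [Submodule.span_le]
    rintro v ⟨i, hij, c, rfl⟩
    have h1 : K i ≤ Submodule.span ℂ
        {v : Fin n → ℂ | ∃ i, i < j ∧ ∃ c : Fin L, v = fun r => ((M ^ i) * V) r c} := by
      apply Submodule.span_mono
      rintro x ⟨k, hk, c, rfl⟩
      exact ⟨k, lt_of_le_of_lt hk hij, c, rfl⟩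
    exact h1 (claim1 i c)
  · rw [Submodule.span_le]
    rintro v ⟨i, hij, c, rfl⟩
    have h1 : K' i ≤ Submodule.span ℂ
        {v : Fin n → ℂ | ∃ i, i < j ∧ ∃ c : Fin L, v = fun r => (S^[i] V) r c} := by
      apply Submodule.span_mono
      rintro x ⟨k, hk, c, rfl⟩
      exact ⟨k, lt_of_le_of_lt hk hij, c, rfl⟩
    exact h1 (claim2 i c)

/-- Shift-invariance of the projected block Krylov subspace: if all columns of `V` are
orthogonal to `C` (i.e. `P V = 0` for the orthogonal projector `P` onto `C`), then
`𝕂_j((I−P)∘T, V) = 𝕂_j((I−P)A, V)` for the Sylvester operator `T(F) = A F + F D̃`. -/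
theorem proj_sylvester_block_krylov_invariance (n L j : ℕ) (A P : Matrix (Fin n) (Fin n) ℂ)
    (hP2 : P * P = P) (hPh : Pᴴ = P)
    (Dt : Matrix (Fin L) (Fin L) ℂ) (V : Matrix (Fin n) (Fin L) ℂ) (hV : P * V = 0) :
    Submodule.span ℂ
      {v : Fin n → ℂ | ∃ i, i < j ∧ ∃ c : Fin L,
        v = fun r =>
          ((fun F => ((1 : Matrix (Fin n) (Fin n) ℂ) - P) * (A * F + F * Dt))^[i] V) r c} =
    Submodule.span ℂ
      {v : Fin n → ℂ | ∃ i, i < j ∧ ∃ c : Fin L,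
        v = fun r => (((((1 : Matrix (Fin n) (Fin n) ℂ) - P) * A) ^ i) * V) r c} := by
  apply aux_krylov
  · rw [Matrix.sub_mul, Matrix.mul_sub, Matrix.mul_sub, hP2]
    simp
  · rw [Matrix.sub_mul, hV]
    simp
end

section
/- Let U, C ∈ ℂ^{n×k} with C = AU, C*C = I_k, and C*(C+σU) invertible for σ ∈ ℂ. Let Q_σ = (C + σU)(C*(C + σU))^{-1}C*. Suppose (A + σI)x = b, x₀ ∈ ℂⁿ, r₀ = b − (A + σI)x₀. Define x̂₀ = x₀ + U (C*(C + σU))^{-1} C* r₀. Then the residual r̂₀ = b − (A + σI) x̂₀ equals (I − Q_σ) r₀, and C* r̂₀ = 0 (i.e., r̂₀ is orthogonal to the columns of C). -/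
open Matrix

/-- Obliquely projected residual: with `x̂₀ = x₀ + U (C*(C+σU))⁻¹ C* r₀`, the new residual
`b − (A + σI) x̂₀` equals `(I − Q_σ) r₀` and is orthogonal to the columns of `C`. -/
theorem oblique_projected_residual (n k : ℕ) (A : Matrix (Fin n) (Fin n) ℂ)
    (U C : Matrix (Fin n) (Fin k) ℂ) (hC : C = A * U) (hCC : Cᴴ * C = 1)
    (σ : ℂ) (hinv : IsUnit (Cᴴ * (C + σ • U)))
    (Q : Matrix (Fin n) (Fin n) ℂ)
    (hQ : Q = (C + σ • U) * (Cᴴ * (C + σ • U))⁻¹ * Cᴴ)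
    (b x x₀ r₀ : Fin n → ℂ)
    (hx : (A + σ • (1 : Matrix (Fin n) (Fin n) ℂ)) *ᵥ x = b)
    (hr₀ : r₀ = b - (A + σ • (1 : Matrix (Fin n) (Fin n) ℂ)) *ᵥ x₀)
    (xhat : Fin n → ℂ)
    (hxhat : xhat = x₀ + U *ᵥ ((Cᴴ * (C + σ • U))⁻¹ *ᵥ (Cᴴ *ᵥ r₀))) :
    b - (A + σ • (1 : Matrix (Fin n) (Fin n) ℂ)) *ᵥ xhat = r₀ - Q *ᵥ r₀ ∧
      Cᴴ *ᵥ (b - (A + σ • (1 : Matrix (Fin n) (Fin n) ℂ)) *ᵥ xhat) = 0 := by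
  set M := Cᴴ * (C + σ • U) with hM
  have hdet : IsUnit M.det := (Matrix.isUnit_iff_isUnit_det M).mp hinv
  have hMM : M * M⁻¹ = 1 := Matrix.mul_nonsing_inv M hdet
  have hAU : (A + σ • (1 : Matrix (Fin n) (Fin n) ℂ)) * U = C + σ • U := by
    rw [Matrix.add_mul, hC, Matrix.smul_mul, Matrix.one_mul]
  have h1 : b - (A + σ • (1 : Matrix (Fin n) (Fin n) ℂ)) *ᵥ xhat = r₀ - Q *ᵥ r₀ := by
    rw [hxhat, mulVec_add, hr₀, hQ, mulVec_mulVec, hAU]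
    simp only [← mulVec_mulVec]
    abel
  refine ⟨h1, ?_⟩
  have hkey : Cᴴ * ((C + σ • U) * M⁻¹ * Cᴴ) = Cᴴ := by
    rw [← Matrix.mul_assoc, ← Matrix.mul_assoc, ← hM, hMM, Matrix.one_mul]
  rw [h1, mulVec_sub, hQ, mulVec_mulVec, hkey, sub_self]
end

section
/- With U ∈ ℂ^{n×k} full rank, C = AU with C*C = I, and σ ∈ ℂ such that C*(C + σU) is invertible, define Q^U_σ = U (C*(C + σU))^{-1} C* (A + σI). Then Q^U_σ is a projector onto range(U): (Q^U_σ)² = Q^U_σ and Q^U_σ U = U; moreover Q^U_σ w = 0 if and only if C*(A + σI)w = 0. -/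
open Matrix

/-- The oblique projector `Q^U_σ = U (C*(C+σU))⁻¹ C*(A+σI)` is a projector onto the
column space of `U`, and its kernel is `{w : C*(A+σI)w = 0}`. -/
theorem oblique_projector_onto_U (n k : ℕ) (A : Matrix (Fin n) (Fin n) ℂ)
    (U C : Matrix (Fin n) (Fin k) ℂ) (hC : C = A * U) (hCC : Cᴴ * C = 1)
    (hUrank : ∀ z : Fin k → ℂ, U *ᵥ z = 0 → z = 0)
    (σ : ℂ) (hinv : IsUnit (Cᴴ * (C + σ • U)))
    (QU : Matrix (Fin n) (Fin n) ℂ)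
    (hQU : QU = U * (Cᴴ * (C + σ • U))⁻¹ * Cᴴ * (A + σ • (1 : Matrix (Fin n) (Fin n) ℂ))) :
    QU * QU = QU ∧ QU * U = U ∧
      (∀ w : Fin n → ℂ,
        QU *ᵥ w = 0 ↔ Cᴴ *ᵥ ((A + σ • (1 : Matrix (Fin n) (Fin n) ℂ)) *ᵥ w) = 0) := by
  set M := Cᴴ * (C + σ • U) with hMdef
  have hdet : IsUnit M.det := (Matrix.isUnit_iff_isUnit_det M).mp hinv
  have hMinv : M⁻¹ * M = 1 := Matrix.nonsing_inv_mul M hdet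
  have hinvM : M * M⁻¹ = 1 := Matrix.mul_nonsing_inv M hdet
  have hAU : (A + σ • (1 : Matrix (Fin n) (Fin n) ℂ)) * U = C + σ • U := by
    rw [Matrix.add_mul, Matrix.smul_mul, Matrix.one_mul, hC]
  have hkey : Cᴴ * ((A + σ • (1 : Matrix (Fin n) (Fin n) ℂ)) * U) = M := by
    rw [hAU]
  have hQUU : QU * U = U := by
    rw [hQU]
    calc U * M⁻¹ * Cᴴ * (A + σ • 1) * U
        = U * (M⁻¹ * (Cᴴ * ((A + σ • 1) * U))) := by
          simp only [Matrix.mul_assoc]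
      _ = U := by rw [hkey, hMinv, Matrix.mul_one]
  refine ⟨?_, hQUU, ?_⟩
  · nth_rewrite 2 [hQU]
    rw [show U * M⁻¹ * Cᴴ * (A + σ • 1) = U * (M⁻¹ * (Cᴴ * (A + σ • 1))) by
      simp only [Matrix.mul_assoc], ← Matrix.mul_assoc QU U _, hQUU, hQU]
    simp only [Matrix.mul_assoc]
  · intro w
    have hrw : QU *ᵥ w
        = U *ᵥ (M⁻¹ *ᵥ (Cᴴ *ᵥ ((A + σ • (1 : Matrix (Fin n) (Fin n) ℂ)) *ᵥ w))) := by
      rw [hQU]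
      simp [Matrix.mulVec_mulVec, Matrix.mul_assoc]
    constructor
    · intro h
      have h1 : M⁻¹ *ᵥ (Cᴴ *ᵥ ((A + σ • (1 : Matrix (Fin n) (Fin n) ℂ)) *ᵥ w)) = 0 :=
        hUrank _ (by rw [← hrw]; exact h)
      have h2 := congrArg (M *ᵥ ·) h1
      simpa [Matrix.mulVec_mulVec, ← Matrix.mul_assoc, hinvM] using h2
    · intro h
      rw [hrw, h]
      simp
end

section
/- Suppose the augmented Arnoldi relation A [U W_j] = [C W_{j+1}] G̅_j holds with G̅_j = [[I, B_j],[0, H̄_j]], where W_{j+1} has orthonormal columns, C*C = I, C*W_{j+1} = 0, and W_j is the first jL columns of W_{j+1}. Let [W_{j+1} C U] = [W_{j+1} C Û] T be a QR-type factorization with T = [[I, 0, W_{j+1}*U],[0, I, C*U],[0, 0, N]] and Û having columns orthonormal and orthogonal to both W_{j+1} and C. Then for any σ ∈ ℂ, (A + σI)[W_j U] = [W_{j+1} C Û] G̅_j^{(σ)}, where G̅_j^{(σ)} = [[H̄_j^{(σ)}, σ W_{j+1}*U],[B_j, I + σ C*U],[0, σN]] and H̄_j^{(σ)} = H̄_j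 + σ[I_{jL}; 0_{L×jL}]. -/
/-!
Multiplying out the block product, the `W_j` columns reduce to the Arnoldi relation because
`W_{j+1} [I; 0] = W_j`, and the `U` columns to `A U = C` together with the expansion of `σ U`
along `[W_{j+1} C Û]`.
-/

open Matrix

section

variable {R : Type*} [CommRing R] {m p l k : Type*}

theorem Matrix.of_ite_inl_eq_fromRows_one_zero [DecidableEq p] [DecidableEq l] :
    (of fun r q => if r = Sum.inl q then (1 : R) else 0 : Matrix (p ⊕ l) p R) =
      fromRows 1 0 := by
  ext (a | a) q <;> simp [one_apply, eq_comm]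

variable [Fintype p] [Fintype l]

theorem Matrix.mul_fromRows_one_zero [DecidableEq p] (W : Matrix m (p ⊕ l) R) :
    W * fromRows (1 : Matrix p p R) (0 : Matrix l p R) = W.toCols₁ := by
  ext i j
  simp [Matrix.mul_apply, Fintype.sum_sum_type, one_apply]

variable [Fintype m] [DecidableEq m] [Fintype k]

theorem Matrix.add_smul_one_mul_toCols₁ [DecidableEq p] (A : Matrix m m R)
    (W : Matrix m (p ⊕ l) R) (C : Matrix m k R) (B : Matrix k p R) (H : Matrix (p ⊕ l) p R)
    (hAW : A * W.toCols₁ = C * B + W * H) (σ : R) :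
    (A + σ • 1) * W.toCols₁ = W * (H + σ • fromRows 1 0) + C * B := by
  rw [Matrix.add_mul, hAW, Matrix.mul_add, Matrix.mul_smul, W.mul_fromRows_one_zero,
    Matrix.smul_mul, Matrix.one_mul]
  abel

theorem Matrix.add_smul_one_mul_of_eq_add [DecidableEq k] (A : Matrix m m R)
    (U C Û : Matrix m k R) (W : Matrix m (p ⊕ l) R) (Y : Matrix (p ⊕ l) k R) (Z N : Matrix k k R)
    (hAU : A * U = C) (hU : U = W * Y + C * Z + Û * N) (σ : R) :
    (A + σ • 1) * U = W * (σ • Y) + C * (1 + σ • Z) + Û * (σ • N) := by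
  rw [Matrix.add_mul, hAU, Matrix.smul_mul, Matrix.one_mul, Matrix.mul_add, Matrix.mul_one,
    Matrix.mul_smul, Matrix.mul_smul, Matrix.mul_smul]
  conv_lhs => rw [hU]
  rw [smul_add, smul_add]
  abel

theorem shifted_augmented_arnoldi_fromBlocks [DecidableEq p] [DecidableEq k] (A : Matrix m m R)
    (U C Û : Matrix m k R) (W : Matrix m (p ⊕ l) R) (H : Matrix (p ⊕ l) p R)
    (B : Matrix k p R) (Y : Matrix (p ⊕ l) k R) (Z N : Matrix k k R)
    (hAU : A * U = C) (hAW : A * W.toCols₁ = C * B + W * H)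
    (hU : U = W * Y + C * Z + Û * N) (σ : R) :
    (A + σ • 1) * fromCols W.toCols₁ U =
      fromCols W (fromCols C Û) *
        fromBlocks (H + σ • fromRows 1 0) (σ • Y) (fromRows B 0)
          (fromRows (1 + σ • Z) (σ • N)) := by
  rw [fromCols_mul_fromBlocks, fromCols_mul_fromRows, fromCols_mul_fromRows, mul_fromCols,
    add_smul_one_mul_toCols₁ A W C B H hAW, add_smul_one_mul_of_eq_add A U C Û W Y Z N hAU hU,
    Matrix.mul_zero, add_zero, add_assoc]

end

theorem shifted_augmented_arnoldi_general (n p L k : ℕ) (A : Matrix (Fin n) (Fin n) ℂ)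
    (U C Uhat : Matrix (Fin n) (Fin k) ℂ)
    (W1 : Matrix (Fin n) (Fin p ⊕ Fin L) ℂ)
    (Wj : Matrix (Fin n) (Fin p) ℂ) (hWj : Wj = fun r q => W1 r (Sum.inl q))
    (H : Matrix (Fin p ⊕ Fin L) (Fin p) ℂ) (B : Matrix (Fin k) (Fin p) ℂ)
    (N : Matrix (Fin k) (Fin k) ℂ)
    -- the augmented Arnoldi relation A[U W_j] = [C W_{j+1}] [[I,B],[0,H̄]]
    (hC : A * U = C) (hArnoldi : A * Wj = C * B + W1 * H)
    -- QR-type factorization of U against [W_{j+1} C Û]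
    (hQR : U = W1 * (W1ᴴ * U) + C * (Cᴴ * U) + Uhat * N)
    (σ : ℂ) :
    (A + σ • (1 : Matrix (Fin n) (Fin n) ℂ)) *
        (Matrix.of fun r c => Sum.elim (fun q => Wj r q) (fun a => U r a) c) =
      (Matrix.of fun r c =>
          Sum.elim (fun q => W1 r q) (Sum.elim (fun a => C r a) (fun a => Uhat r a)) c :
        Matrix (Fin n) ((Fin p ⊕ Fin L) ⊕ (Fin k ⊕ Fin k)) ℂ) *
      Matrix.fromBlocks
        (H + σ • (Matrix.of fun r q => if r = Sum.inl q then (1 : ℂ) else 0))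
        (σ • (W1ᴴ * U))
        (Matrix.of fun r q => Sum.elim (fun a => B a q) (fun _ => (0 : ℂ)) r)
        (Matrix.of fun r c =>
          Sum.elim (fun a => ((1 : Matrix (Fin k) (Fin k) ℂ) + σ • (Cᴴ * U)) a c)
            (fun a => (σ • N) a c) r) := by
  subst hWj
  rw [of_ite_inl_eq_fromRows_one_zero]
  convert shifted_augmented_arnoldi_fromBlocks A U C Uhat W1 H B _ _ N hC hArnoldi hQR σ using 3
  all_goals first | rfl | ext (_ | _) _ <;> rfl

/-- The shifted augmented Arnoldi relation:
`(A + σI)[W_j U] = [W_{j+1} C Û] G̅_j^{(σ)}`. -/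
theorem shifted_augmented_arnoldi (n p L k : ℕ) (A : Matrix (Fin n) (Fin n) ℂ)
    (U C Uhat : Matrix (Fin n) (Fin k) ℂ)
    (W1 : Matrix (Fin n) (Fin p ⊕ Fin L) ℂ)
    (Wj : Matrix (Fin n) (Fin p) ℂ) (hWj : Wj = fun r q => W1 r (Sum.inl q))
    (H : Matrix (Fin p ⊕ Fin L) (Fin p) ℂ) (B : Matrix (Fin k) (Fin p) ℂ)
    (N : Matrix (Fin k) (Fin k) ℂ)
    -- orthonormality assumptions
    (hCC : Cᴴ * C = 1) (hWW : W1ᴴ * W1 = 1) (hCW : Cᴴ * W1 = 0)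
    (hUhat : Uhatᴴ * Uhat = 1) (hUhatW : W1ᴴ * Uhat = 0) (hUhatC : Cᴴ * Uhat = 0)
    -- the augmented Arnoldi relation A[U W_j] = [C W_{j+1}] [[I,B],[0,H̄]]
    (hC : A * U = C) (hB : B = Cᴴ * (A * Wj)) (hArnoldi : A * Wj = C * B + W1 * H)
    -- QR-type factorization of U against [W_{j+1} C Û]
    (hQR : U = W1 * (W1ᴴ * U) + C * (Cᴴ * U) + Uhat * N)
    (σ : ℂ) :
    (A + σ • (1 : Matrix (Fin n) (Fin n) ℂ)) *
        (Matrix.of fun r c => Sum.elim (fun q => Wj r q) (fun a => U r a) c) =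
      (Matrix.of fun r c =>
          Sum.elim (fun q => W1 r q) (Sum.elim (fun a => C r a) (fun a => Uhat r a)) c :
        Matrix (Fin n) ((Fin p ⊕ Fin L) ⊕ (Fin k ⊕ Fin k)) ℂ) *
      Matrix.fromBlocks
        (H + σ • (Matrix.of fun r q => if r = Sum.inl q then (1 : ℂ) else 0))
        (σ • (W1ᴴ * U))
        (Matrix.of fun r q => Sum.elim (fun a => B a q) (fun _ => (0 : ℂ)) r)
        (Matrix.of fun r c =>
          Sum.elim (fun a => ((1 : Matrix (Fin k) (Fin k) ℂ) + σ • (Cᴴ * U)) a c)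
            (fun a => (σ • N) a c) r) :=
  shifted_augmented_arnoldi_general n p L k A U C Uhat W1 Wj hWj H B N hC hArnoldi hQR σ
end
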